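/- arXiv:1002.4911 — 4 statements merged into one kernel-verified Lean document; each statement's English description precedes it below -/
import Mathlib

section
/- Let α, τ > 0. There exists a constant d > 0, depending only on α, τ and the dimension n, such that whenever B₁ = B(c₁, r₁) is a ball in 𝓑_α and B₂ = B(c₂, r₂) is any Euclidean ball with B₁ ∩ B₂ ≠ ∅ and r₂ ≤ τ r₁, then γ(B₂) ≤ d · γ(B₁). -/
open MeasureTheory Metric Set

noncomputable section

/-- Euclidean space ℝⁿ. -/
abbrev E (n : ℕ) := EuclideanSpace ℝ (Fin n)

/-- The standard Gaussian measure on ℝⁿ. -/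
def gaussianM (n : ℕ) : Measure (E n) :=
  volume.withDensity
    (fun x => ENNReal.ofReal ((2 * Real.pi) ^ (-(n : ℝ) / 2) * Real.exp (-‖x‖ ^ 2 / 2)))

/-- m(x) = min {1, 1/|x|} (with value 1 at x = 0). -/
def mFun {n : ℕ} (x : E n) : ℝ := if ‖x‖ ≤ 1 then 1 else ‖x‖⁻¹

lemma mFun_pos {n : ℕ} (x : E n) : 0 < mFun x := by
  unfold mFun; split
  · norm_num
  · exact inv_pos.2 (lt_trans one_pos (lt_of_not_ge ‹_›))

lemma mFun_le_one {n : ℕ} (x : E n) : mFun x ≤ 1 := by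
  unfold mFun; split
  · exact le_refl 1
  · exact le_of_lt (inv_lt_one_of_one_lt₀ (lt_of_not_ge ‹_›))

lemma norm_mul_mFun_le {n : ℕ} (x : E n) : ‖x‖ * mFun x ≤ 1 := by
  unfold mFun; split
  · simpa using ‹_›
  · have h1 : (1:ℝ) < ‖x‖ := lt_of_not_ge ‹_›
    rw [mul_inv_cancel₀ (ne_of_gt (by linarith))]

/-- key pointwise density comparison -/
lemma sq_diff_le {n : ℕ} (c y : E n) (C Q : ℝ) (hC : 0 < C)
    (hQ : Q ≤ C * mFun c) (hy : y ∈ ball c Q) :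
    |‖y‖ ^ 2 - ‖c‖ ^ 2| ≤ 2 * C + 3 * C ^ 2 := by
  have hd : |‖y‖ - ‖c‖| ≤ C * mFun c := by
    have h1 : |‖y‖ - ‖c‖| ≤ ‖y - c‖ := abs_norm_sub_norm_le y c
    have h2 : ‖y - c‖ < Q := by simpa [mem_ball, dist_eq_norm] using hy
    linarith
  have hm := mFun_pos c
  have hm1 := mFun_le_one c
  have hbm := norm_mul_mFun_le c
  have hy0 : (0:ℝ) ≤ ‖y‖ := norm_nonneg _
  have hc0 : (0:ℝ) ≤ ‖c‖ := norm_nonneg _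
  rw [abs_le] at hd ⊢
  constructor <;> nlinarith [sq_nonneg (‖y‖ - ‖c‖), sq_nonneg (‖y‖ + ‖c‖),
    mul_pos hC hm, mul_le_of_le_one_right hC.le hm1,
    mul_le_mul_of_nonneg_left hbm (le_of_lt hC),
    mul_le_mul_of_nonneg_left hm1 (mul_pos hC hm).le]

/-- Doubling property for admissible balls: if `B₁ = B(c₁,r₁) ∈ 𝓑_α`, `B₂ = B(c₂,r₂)` is any
ball intersecting `B₁` with `r₂ ≤ τ r₁`, then `γ(B₂) ≤ d γ(B₁)` with `d` depending only on
`α`, `τ` and the dimension `n`. -/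
theorem stmt0 (n : ℕ) (hn : 1 ≤ n) (α τ : ℝ) (hα : 0 < α) (hτ : 0 < τ) :
    ∃ d : ℝ, 0 < d ∧
      ∀ (c₁ c₂ : E n) (r₁ r₂ : ℝ),
        0 ≤ r₁ → r₁ ≤ α * mFun c₁ → 0 ≤ r₂ → r₂ ≤ τ * r₁ →
        (ball c₁ r₁ ∩ ball c₂ r₂).Nonempty →
        gaussianM n (ball c₂ r₂) ≤ ENNReal.ofReal d * gaussianM n (ball c₁ r₁) := by
  set C : ℝ := (1 + 2 * τ) * α with hCdef
  have hτ1 : (0:ℝ) < 1 + 2 * τ := by linarith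
  have hC : 0 < C := mul_pos hτ1 hα
  set K : ℝ := 2 * C + 3 * C ^ 2 with hKdef
  refine ⟨(1 + 2 * τ) ^ n * Real.exp K, by positivity, ?_⟩
  rintro c₁ c₂ r₁ r₂ hr₁ hr₁α hr₂ hr₂τ ⟨z, hz₁, hz₂⟩
  have hr₁0 : 0 < r₁ := lt_of_le_of_lt dist_nonneg (mem_ball.1 hz₁)
  have hm := mFun_pos c₁
  set R : ℝ := (1 + 2 * τ) * r₁ with hRdef
  have hR0 : 0 < R := mul_pos hτ1 hr₁0
  -- inclusion
  have hsub : ball c₂ r₂ ⊆ ball c₁ R := by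
    intro y hy
    rw [mem_ball] at hy hz₁ hz₂ ⊢
    have h1 : dist y c₁ ≤ dist y c₂ + dist c₂ z + dist z c₁ := dist_triangle4 y c₂ z c₁
    have h2 : dist c₂ z = dist z c₂ := dist_comm _ _
    calc dist y c₁ ≤ dist y c₂ + dist z c₂ + dist z c₁ := by rw [← h2]; exact h1
      _ < r₂ + r₂ + r₁ := by linarith
      _ ≤ R := by rw [hRdef]; linarith
  have hRC : R ≤ C * mFun c₁ := by
    rw [hRdef, hCdef, mul_assoc]
    exact mul_le_mul_of_nonneg_left hr₁α hτ1.le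
  have hr₁C : r₁ ≤ C * mFun c₁ := by
    refine le_trans ?_ hRC
    nlinarith
  -- density constants
  set cn : ℝ := (2 * Real.pi) ^ (-(n : ℝ) / 2) with hcndef
  have hcn : 0 < cn := Real.rpow_pos_of_pos (by positivity) _
  set U : ℝ := cn * Real.exp (-‖c₁‖ ^ 2 / 2 + K / 2) with hUdef
  set L : ℝ := cn * Real.exp (-‖c₁‖ ^ 2 / 2 - K / 2) with hLdef
  have hmeas : Measurable fun x : E n => ENNReal.ofReal (cn * Real.exp (-‖x‖ ^ 2 / 2)) := by
    apply Measurable.ennreal_ofReal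
    exact (continuous_const.mul ((continuous_norm.pow 2).neg.div_const 2).rexp).measurable
  -- upper bound on gaussianM of ball c₁ R
  have hupper : gaussianM n (ball c₁ R) ≤ ENNReal.ofReal U * volume (ball c₁ R) := by
    rw [gaussianM, withDensity_apply _ measurableSet_ball, ← setLIntegral_const]
    refine setLIntegral_mono measurable_const ?_
    intro y hy
    refine ENNReal.ofReal_le_ofReal ?_
    rw [hUdef]
    refine mul_le_mul_of_nonneg_left ?_ hcn.le
    refine Real.exp_le_exp.2 ?_
    have := sq_diff_le c₁ y C R hC hRC hy
    rw [abs_le] at this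
    linarith [this.1]
  -- lower bound on gaussianM of ball c₁ r₁
  have hlower : ENNReal.ofReal L * volume (ball c₁ r₁) ≤ gaussianM n (ball c₁ r₁) := by
    rw [gaussianM, withDensity_apply _ measurableSet_ball, ← setLIntegral_const]
    refine setLIntegral_mono hmeas ?_
    intro y hy
    refine ENNReal.ofReal_le_ofReal ?_
    rw [hLdef]
    refine mul_le_mul_of_nonneg_left ?_ hcn.le
    refine Real.exp_le_exp.2 ?_
    have := sq_diff_le c₁ y C r₁ hC hr₁C hy
    rw [abs_le] at this
    linarith [this.2]
  -- volume computations
  have hvolR : volume (ball c₁ R) = ENNReal.ofReal (R ^ n) * volume (ball (0 : E n) 1) := by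
    rw [Measure.addHaar_ball_of_pos volume c₁ hR0, finrank_euclideanSpace_fin]
  have hvolr : volume (ball c₁ r₁) = ENNReal.ofReal (r₁ ^ n) * volume (ball (0 : E n) 1) := by
    rw [Measure.addHaar_ball_of_pos volume c₁ hr₁0, finrank_euclideanSpace_fin]
  -- real-number coefficient identity
  have hcoeff : U * R ^ n = ((1 + 2 * τ) ^ n * Real.exp K) * (L * r₁ ^ n) := by
    rw [hUdef, hLdef, hRdef, mul_pow]
    have : -‖c₁‖ ^ 2 / 2 + K / 2 = K + (-‖c₁‖ ^ 2 / 2 - K / 2) := by ring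
    rw [this, Real.exp_add]
    ring
  have hU0 : 0 ≤ U := by rw [hUdef]; positivity
  have hL0 : 0 ≤ L := by rw [hLdef]; positivity
  have hD0 : 0 ≤ (1 + 2 * τ) ^ n * Real.exp K := by positivity
  have e1 : ENNReal.ofReal U * volume (ball c₁ R) =
      ENNReal.ofReal ((1 + 2 * τ) ^ n * Real.exp K) *
        (ENNReal.ofReal L * volume (ball c₁ r₁)) := by
    rw [hvolR, hvolr]
    calc ENNReal.ofReal U * (ENNReal.ofReal (R ^ n) * volume (ball (0 : E n) 1))
        = ENNReal.ofReal (U * R ^ n) * volume (ball (0 : E n) 1) := by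
          rw [ENNReal.ofReal_mul hU0, mul_assoc]
      _ = ENNReal.ofReal (((1 + 2 * τ) ^ n * Real.exp K) * (L * r₁ ^ n)) *
            volume (ball (0 : E n) 1) := by rw [hcoeff]
      _ = ENNReal.ofReal ((1 + 2 * τ) ^ n * Real.exp K) *
            (ENNReal.ofReal L * (ENNReal.ofReal (r₁ ^ n) * volume (ball (0 : E n) 1))) := by
          rw [ENNReal.ofReal_mul hD0, ENNReal.ofReal_mul hL0, mul_assoc, mul_assoc]
  calc gaussianM n (ball c₂ r₂) ≤ gaussianM n (ball c₁ R) := measure_mono hsub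
    _ ≤ ENNReal.ofReal U * volume (ball c₁ R) := hupper
    _ = ENNReal.ofReal ((1 + 2 * τ) ^ n * Real.exp K) *
          (ENNReal.ofReal L * volume (ball c₁ r₁)) := e1
    _ ≤ ENNReal.ofReal ((1 + 2 * τ) ^ n * Real.exp K) * gaussianM n (ball c₁ r₁) :=
        mul_le_mul_right hlower _
end
end

section
/- For every α > 0 there exists a constant d' > 0, depending only on α and the dimension n, such that γ(B(x, 2r)) ≤ d' · γ(B(x, r)) for every ball B(x, r) ∈ 𝓑_α. -/
open MeasureTheory Metric Set

noncomputable section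

/-- For every `α > 0` there is `d' > 0`, depending only on `α` and `n`, with
`γ(B(x,2r)) ≤ d' γ(B(x,r))` for every admissible ball `B(x,r) ∈ 𝓑_α`. -/
theorem stmt1 (n : ℕ) (hn : 1 ≤ n) (α : ℝ) (hα : 0 < α) :
    ∃ d' : ℝ, 0 < d' ∧
      ∀ (x : E n) (r : ℝ), 0 ≤ r → r ≤ α * mFun x →
        gaussianM n (ball x (2 * r)) ≤ ENNReal.ofReal d' * gaussianM n (ball x r) := by
  set K : ℝ := 2 * α * (1 + α) with hK
  have hK0 : 0 ≤ K := by positivity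
  set c : ℝ := (2 * Real.pi) ^ (-(n : ℝ) / 2) with hc
  have hc0 : 0 < c := by
    apply Real.rpow_pos_of_pos
    positivity
  refine ⟨2 ^ n * Real.exp (2 * K), by positivity, ?_⟩
  intro x r hr hrα
  have hm0 : 0 < mFun x := by
    unfold mFun; split
    · norm_num
    · next h => exact inv_pos.mpr (by linarith [not_le.mp h])
  have hm1 : mFun x ≤ 1 := by
    unfold mFun; split
    · exact le_refl 1
    · next h =>
      have h1 : (1:ℝ) < ‖x‖ := not_le.mp h
      have h2 : ‖x‖⁻¹ * ‖x‖ = 1 := inv_mul_cancel₀ (by linarith)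
      nlinarith [inv_pos.mpr (show (0:ℝ) < ‖x‖ by linarith)]
  have hm2 : mFun x * ‖x‖ ≤ 1 := by
    unfold mFun; split
    · next h => simpa using h
    · next h =>
        have h1 : (0:ℝ) < ‖x‖ := by linarith [not_le.mp h]
        rw [inv_mul_cancel₀ h1.ne']
  have hmeas : Measurable (fun y : E n => ENNReal.ofReal (c * Real.exp (-‖y‖ ^ 2 / 2))) := by
    fun_prop
  have hdiff : ∀ y ∈ ball x (2 * r), |‖y‖ ^ 2 - ‖x‖ ^ 2| ≤ 2 * K := by
    intro y hy
    have h1 : ‖y - x‖ < 2 * r := by rwa [mem_ball, dist_eq_norm] at hy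
    have h2 : |‖y‖ - ‖x‖| ≤ ‖y - x‖ := abs_norm_sub_norm_le y x
    have h3 : 0 ≤ ‖y‖ := norm_nonneg y
    have h4 : 0 ≤ ‖x‖ := norm_nonneg x
    have hαm : r ≤ α := le_trans hrα (by nlinarith)
    have key : |‖y‖ ^ 2 - ‖x‖ ^ 2| = |‖y‖ - ‖x‖| * (‖y‖ + ‖x‖) := by
      rw [← abs_of_nonneg (by linarith : 0 ≤ ‖y‖ + ‖x‖), ← abs_mul]
      ring_nf
    rw [key]
    have h5 : |‖y‖ - ‖x‖| ≤ 2 * (α * mFun x) := by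
      calc |‖y‖ - ‖x‖| ≤ ‖y - x‖ := h2
        _ ≤ 2 * r := h1.le
        _ ≤ 2 * (α * mFun x) := by linarith
    have h6 : ‖y‖ + ‖x‖ ≤ 2 * ‖x‖ + 2 * α := by
      have h2' := abs_le.mp h2
      linarith [h2'.1, h2'.2]
    calc |‖y‖ - ‖x‖| * (‖y‖ + ‖x‖) ≤ 2 * (α * mFun x) * (2 * ‖x‖ + 2 * α) := by
          apply mul_le_mul h5 h6 (by linarith) (by positivity)
      _ ≤ 2 * K := by
          rw [hK]
          nlinarith [mul_le_mul_of_nonneg_left hm2 hα.le,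
            mul_le_mul_of_nonneg_left hm1 (mul_nonneg hα.le hα.le)]
  -- upper bound for the density on the big ball
  have hub : gaussianM n (ball x (2 * r)) ≤
      ENNReal.ofReal (c * (Real.exp K * Real.exp (-‖x‖ ^ 2 / 2))) * volume (ball x (2 * r)) := by
    rw [gaussianM, withDensity_apply _ measurableSet_ball]
    calc ∫⁻ y in ball x (2 * r), ENNReal.ofReal (c * Real.exp (-‖y‖ ^ 2 / 2)) ∂volume
        ≤ ∫⁻ _ in ball x (2 * r),
            ENNReal.ofReal (c * (Real.exp K * Real.exp (-‖x‖ ^ 2 / 2))) ∂volume := by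
          apply setLIntegral_mono measurable_const
          intro y hy
          apply ENNReal.ofReal_le_ofReal
          apply mul_le_mul_of_nonneg_left _ hc0.le
          rw [← Real.exp_add]
          apply Real.exp_le_exp.mpr
          have := hdiff y hy
          rw [abs_le] at this
          linarith [this.1]
      _ = ENNReal.ofReal (c * (Real.exp K * Real.exp (-‖x‖ ^ 2 / 2))) * volume (ball x (2 * r)) :=
          setLIntegral_const _ _
  -- lower bound for the density on the small ball
  have hlb : ENNReal.ofReal (c * (Real.exp (-K) * Real.exp (-‖x‖ ^ 2 / 2))) * volume (ball x r)
      ≤ gaussianM n (ball x r) := by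
    rw [gaussianM, withDensity_apply _ measurableSet_ball]
    rw [← setLIntegral_const]
    apply setLIntegral_mono hmeas
    intro y hy
    have hy2 : y ∈ ball x (2 * r) := by
      rcases eq_or_lt_of_le hr with h | h
      · simp [← h] at hy
      · exact ball_subset_ball (by linarith) hy
    apply ENNReal.ofReal_le_ofReal
    apply mul_le_mul_of_nonneg_left _ hc0.le
    rw [← Real.exp_add]
    apply Real.exp_le_exp.mpr
    have := hdiff y hy2
    rw [abs_le] at this
    linarith [this.2]
  -- volume scaling
  haveI : Nontrivial (E n) := Module.nontrivial_of_finrank_pos (R := ℝ)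
    (by rw [finrank_euclideanSpace_fin]; omega)
  have hvol : volume (ball x (2 * r)) = ENNReal.ofReal (2 ^ n) * volume (ball x r) := by
    rw [Measure.addHaar_ball volume x (by positivity : (0:ℝ) ≤ 2 * r),
      Measure.addHaar_ball volume x hr, finrank_euclideanSpace_fin, mul_pow,
      ENNReal.ofReal_mul (by positivity), mul_assoc]
  calc gaussianM n (ball x (2 * r))
      ≤ ENNReal.ofReal (c * (Real.exp K * Real.exp (-‖x‖ ^ 2 / 2))) *
          (ENNReal.ofReal (2 ^ n) * volume (ball x r)) := by rw [← hvol]; exact hub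
    _ = ENNReal.ofReal (c * (Real.exp K * Real.exp (-‖x‖ ^ 2 / 2))) * ENNReal.ofReal (2 ^ n) *
          volume (ball x r) := by rw [mul_assoc]
    _ = ENNReal.ofReal (c * (Real.exp K * Real.exp (-‖x‖ ^ 2 / 2)) * 2 ^ n) *
          volume (ball x r) := by
        rw [← ENNReal.ofReal_mul (by positivity)]
    _ = ENNReal.ofReal (2 ^ n * Real.exp (2 * K) *
          (c * (Real.exp (-K) * Real.exp (-‖x‖ ^ 2 / 2)))) * volume (ball x r) := by
        congr 1
        have he : Real.exp (2 * K) * Real.exp (-K) = Real.exp K := by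
          rw [← Real.exp_add]; ring_nf
        apply congrArg
        rw [← he]; ring
    _ = ENNReal.ofReal (2 ^ n * Real.exp (2 * K)) *
          (ENNReal.ofReal (c * (Real.exp (-K) * Real.exp (-‖x‖ ^ 2 / 2))) *
            volume (ball x r)) := by
        rw [ENNReal.ofReal_mul (by positivity), mul_assoc]
    _ ≤ ENNReal.ofReal (2 ^ n * Real.exp (2 * K)) * gaussianM n (ball x r) :=
        mul_le_mul_right hlb _
end
end

section
/- Let 1 < q < ∞ and α > 0, and let a be a T^{1,q}(γ) α-atom. Then ∫_{ℝⁿ} ( ∬_D 1_{B(y,t)}(x) · γ(B(y,t))^{−1} · |a(y,t)|^q dγ(y) dt/t )^{1/q} dγ(x) ≤ 1. -/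
open MeasureTheory Metric Set
open scoped ENNReal

noncomputable section

/-- The measure `dt/t` on `(0,∞)`. -/
def tMeasure : Measure ℝ :=
  (volume.restrict (Set.Ioi (0 : ℝ))).withDensity fun t => ENNReal.ofReal t⁻¹

/-- The admissible region `D = {(x,t) : 0 < t < m(x)}`. -/
def Dset (n : ℕ) : Set (E n × ℝ) := {p | 0 < p.2 ∧ p.2 < mFun p.1}

/-- The measure `dγ(y) dt/t` on `D`. -/
def DMeasure (n : ℕ) : Measure (E n × ℝ) := ((gaussianM n).prod tMeasure).restrict (Dset n)

/-- The tent with aperture `α` over `A`: `{(y,t) : t > 0, d(y, ∁A) ≥ α t}`. -/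
def tentSet (n : ℕ) (α : ℝ) (A : Set (E n)) : Set (E n × ℝ) :=
  {p | 0 < p.2 ∧ α * p.2 ≤ infDist p.1 Aᶜ}

/-- A `T^{1,q}(γ)` `α`-atom: a measurable function supported in `T_1(B) ∩ D` for some
ball `B ∈ 𝓑_α`, with `‖a‖_{L^q(D, dγ dt/t)} ≤ γ(B)^{-1/q'}` where `1/q' = 1 - 1/q`. -/
def IsTAtom (n : ℕ) (q α : ℝ) (a : E n × ℝ → ℂ) : Prop :=
  Measurable a ∧
  ∃ (c : E n) (r : ℝ), 0 ≤ r ∧ r ≤ α * mFun c ∧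
    (∀ p, p ∉ tentSet n 1 (ball c r) ∩ Dset n → a p = 0) ∧
    (∫⁻ p, (‖a p‖₊ : ℝ≥0∞) ^ q ∂(DMeasure n)) ^ (1 / q) ≤
      gaussianM n (ball c r) ^ (-(1 - 1 / q))

/-! By Fubini the `L¹(γ)` norm of the conical integral is at most `‖a‖_{L^q}^q`, because
averaging over a ball `B(y,t)` has total mass at most one. The conical integral vanishes off the
ball `B` carrying the atom, so Hölder's inequality on `B` costs a factor `γ(B)^{1/q'}`, which the
atom's size condition `‖a‖_{L^q} ≤ γ(B)^{-1/q'}` exactly compensates. In `ℝ≥0∞` one has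
`x⁻¹ * x ≤ 1` also for `x = 0` and `x = ∞`, so null balls need no separate treatment. -/

instance (n : ℕ) : SFinite (gaussianM n) := by unfold gaussianM; infer_instance

instance : SFinite tMeasure := by unfold tMeasure; infer_instance

instance (n : ℕ) : SFinite (DMeasure n) := by unfold DMeasure; infer_instance

section ConicalIntegral

variable {X : Type*} [PseudoMetricSpace X] [MeasurableSpace X]

/-- For `f = |a|^q` this is the `q`-th power of the integrand of the `T^{1,q}(γ)` norm of `a`. -/
def conicalIntegral (μ : Measure X) (ν : Measure (X × ℝ)) (f : X × ℝ → ℝ≥0∞) (x : X) : ℝ≥0∞ :=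
  ∫⁻ p, (ball p.1 p.2).indicator (fun _ => (μ (ball p.1 p.2))⁻¹) x * f p ∂ν

variable {μ : Measure X} {ν : Measure (X × ℝ)} {f : X × ℝ → ℝ≥0∞}

theorem conicalIntegral_eq_zero_of_notMem {s : Set X}
    (hf : ∀ p, f p ≠ 0 → ball p.1 p.2 ⊆ s) {x : X} (hx : x ∉ s) :
    conicalIntegral μ ν f x = 0 := by
  refine (lintegral_congr fun p => ?_).trans lintegral_zero
  by_cases hfp : f p = 0
  · simp [hfp]
  · simp [indicator_of_notMem fun h => hx (hf p hfp h)]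

variable [SecondCountableTopology X] [OpensMeasurableSpace X]

theorem measurable_measure_ball (μ : Measure X) [SFinite μ] :
    Measurable fun p : X × ℝ => μ (ball p.1 p.2) :=
  measurable_measure_prodMk_left <|
    (isOpen_lt (continuous_snd.dist continuous_fst.fst) continuous_fst.snd).measurableSet

theorem measurable_uncurry_conicalIntegrand [SFinite μ] (hf : Measurable f) :
    Measurable fun z : (X × ℝ) × X =>
      (ball z.1.1 z.1.2).indicator (fun _ => (μ (ball z.1.1 z.1.2))⁻¹) z.2 * f z.1 :=
  (((measurable_measure_ball μ).comp measurable_fst).inv.indicator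
    (isOpen_lt (continuous_snd.dist continuous_fst.fst) continuous_fst.snd).measurableSet).mul
    (hf.comp measurable_fst)

theorem measurable_conicalIntegral [SFinite μ] [SFinite ν] (hf : Measurable f) :
    Measurable (conicalIntegral μ ν f) :=
  (measurable_uncurry_conicalIntegrand hf).lintegral_prod_left'

theorem lintegral_conicalIntegral_le [SFinite μ] [SFinite ν] (hf : Measurable f) :
    ∫⁻ x, conicalIntegral μ ν f x ∂μ ≤ ∫⁻ p, f p ∂ν := by
  unfold conicalIntegral
  rw [lintegral_lintegral_swap (f := fun x p =>
      (ball p.1 p.2).indicator (fun _ => (μ (ball p.1 p.2))⁻¹) x * f p)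
    ((measurable_uncurry_conicalIntegrand hf).comp measurable_swap).aemeasurable]
  refine lintegral_mono fun p => ?_
  calc ∫⁻ x, (ball p.1 p.2).indicator (fun _ => (μ (ball p.1 p.2))⁻¹) x * f p ∂μ
      ≤ (μ (ball p.1 p.2))⁻¹ * μ (ball p.1 p.2) * f p := by
        rw [lintegral_mul_const _ (measurable_const.indicator measurableSet_ball)]
        gcongr
        exact lintegral_indicator_const_le _ _
    _ ≤ f p := mul_le_of_le_one_left' (ENNReal.inv_mul_le_one _)

end ConicalIntegral

theorem lintegral_rpow_one_div_le_of_eq_zero_off {α : Type*} [MeasurableSpace α]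
    {μ : Measure α} {g : α → ℝ≥0∞} (hg : AEMeasurable g μ) {s : Set α}
    (hgs : ∀ x ∉ s, g x = 0) {q : ℝ} (hq : 1 < q) :
    ∫⁻ x, g x ^ (1 / q) ∂μ ≤ (∫⁻ x, g x ∂μ) ^ (1 / q) * μ s ^ (1 - 1 / q) := by
  have hq' := Real.HolderConjugate.conjExponent hq
  have hsupp : (fun x => g x ^ (1 / q) * 1).support ⊆ s := fun x hx => by
    by_contra hxs
    simp [hgs x hxs, zero_lt_one.trans hq] at hx
  calc ∫⁻ x, g x ^ (1 / q) ∂μ = ∫⁻ x in s, g x ^ (1 / q) * 1 ∂μ := by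
        simp only [mul_one] at hsupp ⊢
        exact (setLIntegral_eq_of_support_subset hsupp).symm
    _ ≤ (∫⁻ x in s, (g x ^ (1 / q)) ^ q ∂μ) ^ (1 / q) *
        (∫⁻ _ in s, 1 ^ q.conjExponent ∂μ) ^ (1 / q.conjExponent) :=
        ENNReal.lintegral_mul_le_Lp_mul_Lq _ hq' (hg.restrict.pow_const _) aemeasurable_const
    _ = (∫⁻ x in s, g x ∂μ) ^ (1 / q) * μ s ^ (1 - 1 / q) := by
        simp only [one_div, ENNReal.rpow_inv_rpow hq'.ne_zero, ENNReal.one_rpow, lintegral_const,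
          Measure.restrict_apply_univ, one_mul, hq'.one_sub_inv]
    _ ≤ (∫⁻ x, g x ∂μ) ^ (1 / q) * μ s ^ (1 - 1 / q) := by
        gcongr
        exact Measure.restrict_le_self

theorem ball_subset_of_mem_tentSet {n : ℕ} {A : Set (E n)} {p : E n × ℝ}
    (hp : p ∈ tentSet n 1 A) : ball p.1 p.2 ⊆ A :=
  (ball_subset_ball (by simpa using hp.2)).trans ball_infDist_compl_subset

theorem stmt10_general (n : ℕ) (q α : ℝ) (hq : 1 < q)
    (a : E n × ℝ → ℂ) (ha : IsTAtom n q α a) :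
    ∫⁻ x, (∫⁻ p, (ball p.1 p.2).indicator (fun _ => (gaussianM n (ball p.1 p.2))⁻¹) x *
        (‖a p‖₊ : ℝ≥0∞) ^ q ∂(DMeasure n)) ^ (1 / q) ∂(gaussianM n) ≤ 1 := by
  obtain ⟨ha_meas, c, r, -, -, ha_supp, ha_size⟩ := ha
  set f : E n × ℝ → ℝ≥0∞ := fun p => (‖a p‖₊ : ℝ≥0∞) ^ q
  have hf : Measurable f := ha_meas.nnnorm.coe_nnreal_ennreal.pow_const q
  have hf_supp : ∀ p, f p ≠ 0 → ball p.1 p.2 ⊆ ball c r := by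
    intro p hp
    have hap : a p ≠ 0 := fun h => hp (by simp [f, h, zero_lt_one.trans hq])
    exact ball_subset_of_mem_tentSet (not_imp_comm.1 (ha_supp p) hap).1
  change ∫⁻ x, conicalIntegral (gaussianM n) (DMeasure n) f x ^ (1 / q) ∂(gaussianM n) ≤ 1
  calc _ ≤ (∫⁻ x, conicalIntegral (gaussianM n) (DMeasure n) f x ∂(gaussianM n)) ^ (1 / q) *
        gaussianM n (ball c r) ^ (1 - 1 / q) :=
        lintegral_rpow_one_div_le_of_eq_zero_off (measurable_conicalIntegral hf).aemeasurable
          (fun x hx => conicalIntegral_eq_zero_of_notMem hf_supp hx) hq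
    _ ≤ (∫⁻ p, f p ∂(DMeasure n)) ^ (1 / q) * gaussianM n (ball c r) ^ (1 - 1 / q) := by
        gcongr
        exact lintegral_conicalIntegral_le hf
    _ ≤ gaussianM n (ball c r) ^ (-(1 - 1 / q)) * gaussianM n (ball c r) ^ (1 - 1 / q) := by
        gcongr
    _ ≤ 1 := by
        rw [ENNReal.rpow_neg]
        exact ENNReal.inv_mul_le_one _

/-- Every `T^{1,q}(γ)` `α`-atom `a` satisfies `‖a‖_{T^{1,q}(γ)} ≤ 1`. -/
theorem stmt10 (n : ℕ) (hn : 1 ≤ n) (q α : ℝ) (hq : 1 < q) (hα : 0 < α)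
    (a : E n × ℝ → ℂ) (ha : IsTAtom n q α a) :
    ∫⁻ x, (∫⁻ p, (ball p.1 p.2).indicator (fun _ => (gaussianM n (ball p.1 p.2))⁻¹) x *
        (‖a p‖₊ : ℝ≥0∞) ^ q ∂(DMeasure n)) ^ (1 / q) ∂(gaussianM n) ≤ 1 :=
  stmt10_general n q α hq a ha
end
end

section
/- Let 1 < α < β. There exists an integer N, depending only on α, β and the dimension n, such that for every ball B ∈ 𝓑_β, the set T_1(B) ∩ D can be covered by at most N tents of the form T_1(B') where B' = B(c', r') ∈ 𝓑_α is a ball with radius r' = α·m(c'). -/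
open MeasureTheory Metric Set

noncomputable section

lemma mFun_le_add {n : ℕ} (a b : E n) : mFun a ≤ mFun b + dist a b := by
  have hd : 0 ≤ dist a b := dist_nonneg
  unfold mFun
  split
  · split
    · linarith
    · next hb =>
      have hb1 : 1 < ‖b‖ := lt_of_not_ge hb
      have h1 : ‖b‖ - ‖a‖ ≤ dist a b := by
        rw [dist_eq_norm]
        have := norm_sub_norm_le b a
        rw [norm_sub_rev] at this
        linarith
      next ha =>
      have hbpos : (0:ℝ) < ‖b‖ := lt_trans one_pos hb1
      have e : 1 - ‖b‖⁻¹ = (‖b‖ - 1) / ‖b‖ := by field_simp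
      have h2 : (‖b‖ - 1) / ‖b‖ ≤ ‖b‖ - 1 :=
        div_le_self (by linarith) (by linarith)
      linarith [e ▸ h2]
  · next ha =>
    have ha1 : 1 < ‖a‖ := lt_of_not_ge ha
    have hapos : (0:ℝ) < ‖a‖ := lt_trans one_pos ha1
    split
    · have : ‖a‖⁻¹ ≤ 1 := inv_le_one_of_one_le₀ ha1.le
      linarith
    · next hb =>
      have hb1 : 1 < ‖b‖ := lt_of_not_ge hb
      have hbpos : (0:ℝ) < ‖b‖ := lt_trans one_pos hb1
      rcases le_total ‖b‖ ‖a‖ with h | h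
      · have : ‖a‖⁻¹ ≤ ‖b‖⁻¹ := by gcongr
        linarith
      · have h1 : ‖b‖ - ‖a‖ ≤ dist a b := by
          rw [dist_eq_norm]
          have := norm_sub_norm_le b a
          rw [norm_sub_rev] at this
          linarith
        have e : ‖a‖⁻¹ - ‖b‖⁻¹ = (‖b‖ - ‖a‖) / (‖a‖ * ‖b‖) := by
          field_simp
        have h2 : (‖b‖ - ‖a‖) / (‖a‖ * ‖b‖) ≤ ‖b‖ - ‖a‖ := by
          apply div_le_self (by linarith)
          nlinarith
        linarith [e ▸ h2]

lemma mFun_lower {n : ℕ} {x y : E n} {K : ℝ} (hK : 0 ≤ K)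
    (h : dist y x ≤ K * mFun x) : mFun x ≤ (1 + K) * mFun y := by
  have hmx1 : mFun x ≤ 1 := mFun_le_one x
  have hmxp : 0 < mFun x := mFun_pos x
  have hny : ‖y‖ ≤ ‖x‖ + K * mFun x := by
    have h1 : ‖y‖ - ‖x‖ ≤ ‖y - x‖ := norm_sub_norm_le y x
    have h2 : ‖y - x‖ = dist y x := (dist_eq_norm y x).symm
    linarith [h2 ▸ h1]
  by_cases hy1 : ‖y‖ ≤ 1
  · have hmy : mFun y = 1 := by unfold mFun; simp [hy1]
    rw [hmy]
    nlinarith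
  · have hy1' : 1 < ‖y‖ := lt_of_not_ge hy1
    have hyp : (0:ℝ) < ‖y‖ := lt_trans one_pos hy1'
    have hmy : mFun y = ‖y‖⁻¹ := by unfold mFun; simp [hy1]
    rw [hmy]
    by_cases hx1 : ‖x‖ ≤ 1
    · have hmx : mFun x = 1 := by unfold mFun; simp [hx1]
      rw [hmx] at hny ⊢
      have hy2 : ‖y‖ ≤ 1 + K := by linarith
      calc (1:ℝ) = ‖y‖ * ‖y‖⁻¹ := (mul_inv_cancel₀ hyp.ne').symm
        _ ≤ (1 + K) * ‖y‖⁻¹ := mul_le_mul_of_nonneg_right hy2 (inv_nonneg.2 hyp.le)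
    · have hx1' : 1 < ‖x‖ := lt_of_not_ge hx1
      have hxp : (0:ℝ) < ‖x‖ := lt_trans one_pos hx1'
      have hmx : mFun x = ‖x‖⁻¹ := by unfold mFun; simp [hx1]
      rw [hmx] at hny ⊢
      have hy2 : ‖y‖ ≤ (1 + K) * ‖x‖ := by
        have hKx : K * ‖x‖⁻¹ ≤ K * ‖x‖ := by
          apply mul_le_mul_of_nonneg_left _ hK
          calc ‖x‖⁻¹ ≤ 1 := inv_le_one_of_one_le₀ hx1'.le
            _ ≤ ‖x‖ := hx1'.le
        nlinarith
      have h3 : ‖x‖⁻¹ * ‖y‖ ≤ 1 + K := by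
        rw [inv_mul_le_iff₀ hxp]
        linarith [hy2]
      calc ‖x‖⁻¹ = (‖x‖⁻¹ * ‖y‖) * ‖y‖⁻¹ := by field_simp
        _ ≤ (1 + K) * ‖y‖⁻¹ := mul_le_mul_of_nonneg_right h3 (inv_nonneg.2 hyp.le)

/-- For `1 < α < β` there is `N`, depending only on `α`, `β` and `n`, such that for every
ball `B ∈ 𝓑_β` the set `T_1(B) ∩ D` can be covered by at most `N` tents `T_1(B')`, where
each `B' = B(c', α m(c')) ∈ 𝓑_α`. -/
theorem stmt13 (n : ℕ) (hn : 1 ≤ n) (α β : ℝ) (hα : 1 < α) (hβ : α < β) :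
    ∃ N : ℕ, ∀ (c : E n) (r : ℝ), 0 ≤ r → r ≤ β * mFun c →
      ∃ S : Finset (E n), S.card ≤ N ∧
        tentSet n 1 (ball c r) ∩ Dset n ⊆
          ⋃ c' ∈ S, tentSet n 1 (ball c' (α * mFun c')) := by
  classical
  have hβ1 : 1 < β := hα.trans hβ
  have hβ0 : 0 < β := lt_trans one_pos hβ1
  set ρ : ℝ := (α - 1) / (2 * (2 + β) * β) with hρdef
  have hρpos : 0 < ρ := by
    apply div_pos (by linarith)
    positivity
  obtain ⟨T0, hT0sub, hT0fin, hT0cov⟩ :=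
    finite_cover_balls_of_compact (isCompact_closedBall (0 : E n) 1) hρpos
  refine ⟨hT0fin.toFinset.card, fun c r hr0 hrβ => ?_⟩
  have hmc : 0 < mFun c := mFun_pos c
  set R := β * mFun c with hRdef
  have hR : 0 < R := mul_pos hβ0 hmc
  refine ⟨(hT0fin.toFinset).image (fun x => c + R • x), Finset.card_image_le, ?_⟩
  rintro ⟨y, t⟩ ⟨⟨ht0, hinf⟩, ⟨_, htm⟩⟩
  simp only [one_mul] at hinf
  -- y ∈ ball c r
  have hy : y ∈ ball c r := by
    by_contra hy
    have : infDist y (ball c r)ᶜ = 0 := infDist_zero_of_mem hy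
    linarith [this ▸ hinf]
  have hyc : dist y c < R := lt_of_lt_of_le (mem_ball.1 hy) hrβ
  -- find a net point
  have hz : R⁻¹ • (y - c) ∈ closedBall (0 : E n) 1 := by
    rw [mem_closedBall, dist_zero_right, norm_smul, norm_inv, Real.norm_of_nonneg hR.le]
    rw [inv_mul_le_iff₀ hR, mul_one]
    rw [← dist_eq_norm]
    exact hyc.le
  obtain ⟨x, hxT, hxball⟩ := mem_iUnion₂.1 (hT0cov hz)
  set c' : E n := c + R • x with hc'def
  have hx1 : ‖x‖ ≤ 1 := by
    have := hT0sub hxT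
    rwa [mem_closedBall, dist_zero_right] at this
  have hdyc' : dist y c' ≤ ρ * R := by
    have : y - c' = R • (R⁻¹ • (y - c) - x) := by
      rw [smul_sub, smul_smul, mul_inv_cancel₀ hR.ne', one_smul, hc'def]
      abel
    rw [dist_eq_norm, this, norm_smul, Real.norm_of_nonneg hR.le]
    have hb : ‖R⁻¹ • (y - c) - x‖ < ρ := by
      rw [← dist_eq_norm]
      exact mem_ball.1 hxball
    calc R * ‖R⁻¹ • (y - c) - x‖ ≤ R * ρ := by
          exact mul_le_mul_of_nonneg_left hb.le hR.le
      _ = ρ * R := mul_comm _ _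
  have hρR : ρ * R = (α - 1) * mFun c / (2 * (2 + β)) := by
    rw [hρdef, hRdef]; field_simp
  -- dist c' c ≤ β * mFun c
  have hc'c : dist c' c ≤ β * mFun c := by
    rw [hc'def, dist_eq_norm, add_sub_cancel_left, norm_smul,
      Real.norm_of_nonneg hR.le, hRdef]
    calc β * mFun c * ‖x‖ ≤ β * mFun c * 1 :=
          mul_le_mul_of_nonneg_left hx1 (by positivity)
      _ = β * mFun c := mul_one _
  have hmlow : mFun c ≤ (1 + β) * mFun c' := mFun_lower hβ0.le hc'c
  have hmc' : 0 < mFun c' := mFun_pos c'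
  -- key estimate : 2 * dist y c' ≤ (α - 1) * mFun c'
  have hkey : 2 * dist y c' ≤ (α - 1) * mFun c' := by
    have h1 : dist y c' ≤ (α - 1) * mFun c / (2 * (2 + β)) := hρR ▸ hdyc'
    have h2 : (α - 1) * mFun c ≤ (α - 1) * ((1 + β) * mFun c') :=
      mul_le_mul_of_nonneg_left hmlow (by linarith)
    have h3 : (α - 1) * ((1 + β) * mFun c') / (2 * (2 + β)) ≤ (α - 1) * mFun c' / 2 := by
      rw [div_le_div_iff₀ (by positivity) (by norm_num)]
      nlinarith [hmc'.le]
    have h4 : (α - 1) * mFun c / (2 * (2 + β)) ≤ (α - 1) * ((1 + β) * mFun c') / (2 * (2 + β)) := by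
      gcongr
    linarith
  -- t ≤ α * mFun c' - dist y c'
  have hmyc' : mFun y ≤ mFun c' + dist y c' := mFun_le_add y c'
  have htle : t + dist y c' ≤ α * mFun c' := by nlinarith
  -- membership in the union
  rw [mem_iUnion₂]
  refine ⟨c', Finset.mem_image.2 ⟨x, hT0fin.mem_toFinset.2 hxT, rfl⟩, ht0, ?_⟩
  rw [one_mul]
  -- complement nonempty
  have hne : ((ball c' (α * mFun c'))ᶜ : Set (E n)).Nonempty := by
    refine ⟨c' + (2 * α) • EuclideanSpace.single (⟨0, hn⟩ : Fin n) (1:ℝ), ?_⟩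
    simp only [mem_compl_iff, mem_ball, not_lt]
    rw [dist_eq_norm, add_sub_cancel_left, norm_smul, Real.norm_of_nonneg (by linarith),
      EuclideanSpace.norm_single, norm_one, mul_one]
    nlinarith [mFun_le_one c', hmc'.le]
  by_contra hlt
  push_neg at hlt
  obtain ⟨w, hw, hdw⟩ := (infDist_lt_iff hne).1 hlt
  simp only [mem_compl_iff, mem_ball, not_lt] at hw
  have : dist w c' ≤ dist w y + dist y c' := dist_triangle w y c'
  rw [dist_comm w y] at this
  linarith
end
end
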